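/- Let E be a nonzero reflexive Banach space and A be a monotone subset of E × E*. Then A is maximally monotone if and only if A − G(−J) = E × E*, i.e. every element of E × E* can be written a − b with a ∈ A and b ∈ G(−J), where J is the duality map. -/

import Mathlib

open scoped Pointwise

noncomputable section

variable {E : Type*} [NormedAddCommGroup E] [NormedSpace ℝ E]

/-- `E` is reflexive: the canonical map into the double dual is surjective. -/
def ReflexiveSp (E : Type*) [NormedAddCommGroup E] [NormedSpace ℝ E] : Prop :=
  Function.Surjective (NormedSpace.inclusionInDoubleDual ℝ E)

/-- The SSD pairing `⌊(x,x*),(y,y*)⌋ = ⟨x,y*⟩ + ⟨y,x*⟩` on `E × E*`. -/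
def pairP (p r : E × StrongDual ℝ E) : ℝ := r.2 p.1 + p.2 r.1

/-- `q(x,x*) = ⟨x,x*⟩`. -/
def qP (p : E × StrongDual ℝ E) : ℝ := p.2 p.1

/-- The intrinsic conjugate `f^@(c) = sup_b (⌊b,c⌋ - f(b))` on `E × E*`. -/
def conjP (f : E × StrongDual ℝ E → EReal) (c : E × StrongDual ℝ E) : EReal :=
  ⨆ b : E × StrongDual ℝ E, ((pairP b c : ℝ) : EReal) - f b

/-- A proper function into `(-∞,∞]`: never `⊥` and somewhere finite. -/
def ProperFnP (f : E × StrongDual ℝ E → EReal) : Prop :=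
  (∀ p, f p ≠ ⊥) ∧ ∃ p, f p ≠ ⊤

/-- Convexity for `(-∞,∞]`-valued functions on `E × E*`. -/
def ConvexFnP (f : E × StrongDual ℝ E → EReal) : Prop :=
  ∀ p r : E × StrongDual ℝ E, ∀ t : ℝ, 0 ≤ t → t ≤ 1 →
    f (t • p + (1 - t) • r) ≤ (t : EReal) * f p + ((1 - t : ℝ) : EReal) * f r

/-- `P_q(f) = {b : f(b) = q(b)}`. -/
def PqP (f : E × StrongDual ℝ E → EReal) : Set (E × StrongDual ℝ E) :=
  {p | f p = ((qP p : ℝ) : EReal)}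

/-- `f` is a BC-function: `f^@(b) ≥ f(b) ≥ q(b)` for all `b`. -/
def IsBCP (f : E × StrongDual ℝ E → EReal) : Prop :=
  ∀ p : E × StrongDual ℝ E, ((qP p : ℝ) : EReal) ≤ f p ∧ f p ≤ conjP f p

/-- The effective domain of an `EReal`-valued function on `E × E*`. -/
def domP (f : E × StrongDual ℝ E → EReal) : Set (E × StrongDual ℝ E) :=
  {p | ∃ r : ℝ, f p = (r : EReal)}

/-- A monotone subset of `E × E*`. -/
def MonoSet (A : Set (E × StrongDual ℝ E)) : Prop :=
  ∀ p ∈ A, ∀ r ∈ A, 0 ≤ (p.2 - r.2) (p.1 - r.1)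

/-- A maximally monotone subset of `E × E*`. -/
def MaxMono (A : Set (E × StrongDual ℝ E)) : Prop :=
  A.Nonempty ∧ MonoSet A ∧ ∀ C : Set (E × StrongDual ℝ E), MonoSet C → A ⊆ C → C = A

/-- `G(-J) = {(x,x*) : ½‖x‖² + ½‖x*‖² = -⟨x,x*⟩}` where `J` is the duality map. -/
def GnegJ (E : Type*) [NormedAddCommGroup E] [NormedSpace ℝ E] :
    Set (E × StrongDual ℝ E) :=
  {p | (1 / 2) * ‖p.1‖ ^ 2 + (1 / 2) * ‖p.2‖ ^ 2 = -(p.2 p.1)}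

/-- The graph of a multifunction `S : E ⇉ E*`. -/
def graphOf (S : E → Set (StrongDual ℝ E)) : Set (E × StrongDual ℝ E) :=
  {p | p.2 ∈ S p.1}

/-- `S : E ⇉ E*` is maximally monotone. -/
def MaxMonoOp (S : E → Set (StrongDual ℝ E)) : Prop := MaxMono (graphOf S)

/-- The Fitzpatrick function of a multifunction `S : E ⇉ E*`:
`φ_S(x,x*) = sup_{(s,s*) ∈ G(S)} (⟨x,s*⟩ + ⟨s,x*⟩ - ⟨s,s*⟩)`. -/
def fitz (S : E → Set (StrongDual ℝ E)) (p : E × StrongDual ℝ E) : EReal :=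
  ⨆ s : graphOf S,
    (((s : E × StrongDual ℝ E).2 p.1 + p.2 (s : E × StrongDual ℝ E).1
      - (s : E × StrongDual ℝ E).2 (s : E × StrongDual ℝ E).1 : ℝ) : EReal)

/-- The domain `D(S) = {x : Sx ≠ ∅}` of a multifunction. -/
def domOp (S : E → Set (StrongDual ℝ E)) : Set E := {x | (S x).Nonempty}


/-!
For a maximally monotone `A` and a target `w`, translating `A` by `-w` reduces the claim to
`A ∩ G(-J) ≠ ∅`. The epigraph of the Fitzpatrick function of `A` lies above the concave function
`-g`, `g(c) = ½‖c₁‖² + ½‖c₂‖²`, because maximality gives `φ_A ≥ q ≥ -g`; Hahn–Banach puts a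
continuous affine function `pairP b + β` between them, reflexivity being what lets the linear part
be written through the pairing with some `b ∈ E × E*`. Minimising over `c` yields `g(b) ≤ β`, and the
upper bound on `A` then says that `b` is monotonically related to `A`, so `b ∈ A`, and evaluating at
`b` forces `g(b) + q(b) ≤ 0`, i.e. `b ∈ G(-J)`. Conversely, if `c` is monotonically related to
`A` and `c = a - b` with `a ∈ A`, `b ∈ G(-J)`, then `q(b) = ⟨a - c, a* - c*⟩ ≥ 0` forces `b = 0`.
-/

theorem exists_affine_between_of_concaveOn
    {V : Type*} [TopologicalSpace V] [AddCommGroup V] [IsTopologicalAddGroup V] [Module ℝ V]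
    [ContinuousSMul ℝ V] {h : V → ℝ} (hconc : ConcaveOn ℝ Set.univ h) (hcont : Continuous h)
    {K : Set (V × ℝ)} (hK : Convex ℝ K) (hKne : K.Nonempty)
    (hKup : ∀ c s t, (c, s) ∈ K → s ≤ t → (c, t) ∈ K) (hhK : ∀ p ∈ K, h p.1 ≤ p.2) :
    ∃ (ℓ : StrongDual ℝ V) (β : ℝ), (∀ c, h c ≤ ℓ c + β) ∧ ∀ p ∈ K, ℓ p.1 + β ≤ p.2 := by
  have hDopen : IsOpen {p : V × ℝ | p.1 ∈ Set.univ ∧ p.2 < h p.1} := by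
    simpa only [Set.mem_univ, true_and, Function.comp_apply] using
      isOpen_lt continuous_snd (hcont.comp continuous_fst)
  have hdisj : Disjoint {p : V × ℝ | p.1 ∈ Set.univ ∧ p.2 < h p.1} K :=
    Set.disjoint_left.2 fun p hpD hpK => (hpD.2.trans_le (hhK p hpK)).false
  obtain ⟨f, u, hfD, hfK⟩ :=
    geometric_hahn_banach_open hconc.convex_strict_hypograph hDopen hK hdisj
  set α := f (0, 1)
  have hf : ∀ c s, f (c, s) = f (c, 0) + s * α := fun c s => by
    rw [← smul_eq_mul, ← map_smul, ← map_add]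
    simp
  obtain ⟨⟨c₀, s₀⟩, hp₀⟩ := hKne
  have hα : 0 < α := by
    by_contra! hα
    have hlow := hfD (c₀, h c₀ - 1) ⟨trivial, by simp⟩
    have hhigh := hfK _ (hKup c₀ s₀ _ hp₀ (le_max_left s₀ (h c₀ - 1)))
    rw [hf] at hlow hhigh
    nlinarith [mul_le_mul_of_nonpos_right (le_max_right s₀ (h c₀ - 1)) hα]
  set ℓ := -α⁻¹ • f.comp (ContinuousLinearMap.inl ℝ V ℝ)
  have hℓ : ∀ c, ℓ c + u / α = (u - f (c, 0)) / α := fun c => by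
    simp only [ℓ, smul_apply, ContinuousLinearMap.comp_apply, ContinuousLinearMap.inl_apply,
      smul_eq_mul]
    field_simp
    ring
  refine ⟨ℓ, u / α, fun c => ?_, fun p hp => ?_⟩
  · rw [hℓ]
    refine le_of_forall_lt fun s hs => ?_
    have := hfD (c, s) ⟨trivial, hs⟩
    rw [hf] at this
    rw [lt_div_iff₀ hα]
    linarith
  · rw [hℓ, div_le_iff₀ hα]
    have := hfK p hp
    rw [← Prod.mk.eta (p := p), hf] at this
    linarith

/-- The Fenchel conjugate of `½‖·‖²` is `½‖·‖²` on the dual. -/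
theorem half_mul_norm_sq_le_of_forall {F : Type*} [NormedAddCommGroup F] [NormedSpace ℝ F]
    (φ : StrongDual ℝ F) {β : ℝ} (h : ∀ y, -(1 / 2 * ‖y‖ ^ 2) ≤ φ y + β) :
    1 / 2 * ‖φ‖ ^ 2 ≤ β := by
  have hβ : 0 ≤ β := by simpa using h 0
  have hφ : ‖φ‖ ≤ √(2 * β) := by
    refine φ.opNorm_le_bound (Real.sqrt_nonneg _) fun y => ?_
    have hdisc : discrim (1 / 2 * ‖y‖ ^ 2) (φ y) β ≤ 0 := discrim_le_zero fun t => by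
      have := h (t • y)
      rw [norm_smul, map_smul, smul_eq_mul, Real.norm_eq_abs, mul_pow, sq_abs] at this
      linarith
    rw [Real.norm_eq_abs, ← Real.sqrt_sq (norm_nonneg y), ← Real.sqrt_mul (by positivity)]
    exact Real.abs_le_sqrt (by rw [discrim] at hdisc; linarith)
  have := pow_le_pow_left₀ (norm_nonneg φ) hφ 2
  rw [Real.sq_sqrt (by positivity)] at this
  linarith

theorem half_mul_norm_sq_le_of_forall_dual {F : Type*} [NormedAddCommGroup F] [NormedSpace ℝ F]
    (x : F) {β : ℝ} (h : ∀ ψ : StrongDual ℝ F, -(1 / 2 * ‖ψ‖ ^ 2) ≤ ψ x + β) :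
    1 / 2 * ‖x‖ ^ 2 ≤ β := by
  have hx : ‖NormedSpace.inclusionInDoubleDual ℝ F x‖ = ‖x‖ :=
    (NormedSpace.inclusionInDoubleDualLi ℝ).norm_map x
  simpa only [hx] using half_mul_norm_sq_le_of_forall (NormedSpace.inclusionInDoubleDual ℝ F x) h

/-- With this, `GnegJ E = {c | halfSqNorm c = -qP c}` definitionally. -/
def halfSqNorm (c : E × StrongDual ℝ E) : ℝ := 1 / 2 * ‖c.1‖ ^ 2 + 1 / 2 * ‖c.2‖ ^ 2

theorem continuous_halfSqNorm : Continuous (halfSqNorm (E := E)) := by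
  unfold halfSqNorm
  fun_prop

theorem convexOn_halfSqNorm : ConvexOn ℝ Set.univ (halfSqNorm (E := E)) := by
  have h₁ := ((convexOn_univ_norm (E := E)).pow (fun _ _ => norm_nonneg _) 2).comp_linearMap
    (LinearMap.fst ℝ E (StrongDual ℝ E))
  have h₂ := ((convexOn_univ_norm (E := StrongDual ℝ E)).pow (fun _ _ => norm_nonneg _)
    2).comp_linearMap (LinearMap.snd ℝ E (StrongDual ℝ E))
  exact (h₁.smul (by norm_num : (0 : ℝ) ≤ 1 / 2)).add (h₂.smul (by norm_num : (0 : ℝ) ≤ 1 / 2))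

theorem neg_halfSqNorm_le_qP (c : E × StrongDual ℝ E) : -halfSqNorm c ≤ qP c := by
  have h := (abs_le.mp ((Real.norm_eq_abs _).symm.trans_le (c.2.le_opNorm c.1))).1
  unfold halfSqNorm qP
  nlinarith [sq_nonneg (‖c.1‖ - ‖c.2‖)]

theorem halfSqNorm_le_of_forall (b : E × StrongDual ℝ E) {β : ℝ}
    (h : ∀ c, -halfSqNorm c ≤ pairP b c + β) : halfSqNorm b ≤ β := by
  have hb₂ : ∀ c₂ : StrongDual ℝ E, 1 / 2 * ‖b.2‖ ^ 2 ≤ c₂ b.1 + 1 / 2 * ‖c₂‖ ^ 2 + β :=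
    fun c₂ => half_mul_norm_sq_le_of_forall b.2 fun c₁ => by
      have := h (c₁, c₂)
      simp only [halfSqNorm, pairP] at this
      linarith
  have := half_mul_norm_sq_le_of_forall_dual b.1 (β := β - 1 / 2 * ‖b.2‖ ^ 2) fun c₂ => by
    linarith [hb₂ c₂]
  unfold halfSqNorm
  linarith

theorem exists_pairP_eq (hrefl : ReflexiveSp E) (ℓ : StrongDual ℝ (E × StrongDual ℝ E)) :
    ∃ b : E × StrongDual ℝ E, ∀ c, ℓ c = pairP b c := by
  obtain ⟨b₁, hb₁⟩ := hrefl (ℓ.comp (ContinuousLinearMap.inr ℝ E (StrongDual ℝ E)))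
  refine ⟨(b₁, ℓ.comp (ContinuousLinearMap.inl ℝ E _)), fun c => ?_⟩
  have h₂ : c.2 b₁ = ℓ (0, c.2) := by
    rw [← NormedSpace.dual_def ℝ E b₁ c.2, hb₁]
    rfl
  calc ℓ c = ℓ ((c.1, 0) + (0, c.2)) := by simp
    _ = pairP (b₁, ℓ.comp (ContinuousLinearMap.inl ℝ E _)) c := by
      rw [map_add, pairP, h₂, add_comm]
      rfl

theorem pairP_comm (p r : E × StrongDual ℝ E) : pairP p r = pairP r p := add_comm _ _

theorem pairP_self (p : E × StrongDual ℝ E) : pairP p p = 2 * qP p := two_mul _ |>.symm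

theorem sub_apply_sub_eq (p r : E × StrongDual ℝ E) :
    (p.2 - r.2) (p.1 - r.1) = qP p - pairP p r + qP r := by
  simp only [qP, pairP, sub_apply, map_sub]
  ring

theorem sub_apply_sub_comm (p r : E × StrongDual ℝ E) :
    (p.2 - r.2) (p.1 - r.1) = (r.2 - p.2) (r.1 - p.1) := by
  rw [sub_apply_sub_eq, sub_apply_sub_eq, pairP_comm]
  ring

def MonoRelated (A : Set (E × StrongDual ℝ E)) (c : E × StrongDual ℝ E) : Prop :=
  ∀ a ∈ A, 0 ≤ (a.2 - c.2) (a.1 - c.1)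

theorem MonoSet.insert {A : Set (E × StrongDual ℝ E)} (hA : MonoSet A)
    {c : E × StrongDual ℝ E} (hc : MonoRelated A c) : MonoSet (insert c A) := by
  rintro p (rfl | hp) r (rfl | hr)
  · simp
  · exact sub_apply_sub_comm p r ▸ hc r hr
  · exact hc p hp
  · exact hA p hp r hr

theorem maxMono_iff {A : Set (E × StrongDual ℝ E)} :
    MaxMono A ↔ A.Nonempty ∧ MonoSet A ∧ ∀ c, MonoRelated A c → c ∈ A := by
  refine ⟨fun ⟨hne, hmono, hmax⟩ => ⟨hne, hmono, fun c hc => ?_⟩,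
    fun ⟨hne, hmono, hrel⟩ => ⟨hne, hmono, fun C hC hAC => ?_⟩⟩
  · rw [← hmax _ (hmono.insert hc) (Set.subset_insert c A)]
    exact Set.mem_insert c A
  · exact Set.Subset.antisymm (fun c hc => hrel c fun a ha => hC a (hAC ha) c hc) hAC

/-- The Fitzpatrick inequality `φ_A ≥ q`, in epigraph form. -/
theorem MaxMono.qP_le {A : Set (E × StrongDual ℝ E)} (hA : MaxMono A)
    {c : E × StrongDual ℝ E} {s : ℝ} (h : ∀ a ∈ A, pairP a c - qP a ≤ s) : qP c ≤ s := by
  by_contra! hs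
  have hc : c ∈ A := (maxMono_iff.1 hA).2.2 c fun a ha => by
    rw [sub_apply_sub_eq]
    linarith [h a ha]
  have := h c hc
  rw [pairP_self] at this
  linarith

theorem MaxMono.preimage_add {A : Set (E × StrongDual ℝ E)} (hA : MaxMono A)
    (w : E × StrongDual ℝ E) : MaxMono ((· + w) ⁻¹' A) := by
  obtain ⟨⟨a₀, ha₀⟩, hmono, hrel⟩ := maxMono_iff.1 hA
  refine maxMono_iff.2 ⟨⟨a₀ - w, by simpa using ha₀⟩, fun p hp r hr => ?_,
    fun c hc => hrel _ fun a ha => ?_⟩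
  · simpa using hmono _ hp _ hr
  · have := hc (a - w) (by simpa using ha)
    simpa only [Prod.fst_sub, Prod.snd_sub, Prod.fst_add, Prod.snd_add, sub_sub, add_comm]
      using this

theorem MaxMono.exists_mem_gnegJ (hrefl : ReflexiveSp E) {A : Set (E × StrongDual ℝ E)}
    (hA : MaxMono A) : ∃ b ∈ A, b ∈ GnegJ E := by
  obtain ⟨⟨a₀, ha₀⟩, hmono, hrel⟩ := maxMono_iff.1 hA
  -- the epigraph of the Fitzpatrick function of `A`
  set K := {p : (E × StrongDual ℝ E) × ℝ | ∀ a ∈ A, pairP a p.1 - qP a ≤ p.2}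
  have hK : Convex ℝ K := by
    intro p hp r hr t s ht hs hts a ha
    have hlin : pairP a (t • p.1 + s • r.1) = t * pairP a p.1 + s * pairP a r.1 := by
      simp only [pairP, Prod.fst_add, Prod.snd_add, Prod.smul_fst, Prod.smul_snd, add_apply,
        smul_apply, map_add, map_smul, smul_eq_mul]
      ring
    simp only [Prod.fst_add, Prod.snd_add, Prod.smul_fst, Prod.smul_snd, smul_eq_mul, hlin]
    have hq : qP a = t * qP a + s * qP a := by rw [← add_mul, hts, one_mul]
    linarith [mul_le_mul_of_nonneg_left (hp a ha) ht, mul_le_mul_of_nonneg_left (hr a ha) hs]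
  have hqK : ∀ a ∈ A, (a, qP a) ∈ K := fun a ha a' ha' => by
    have := hmono a' ha' a ha
    rw [sub_apply_sub_eq] at this
    linarith
  have hKup : ∀ c s t, (c, s) ∈ K → s ≤ t → (c, t) ∈ K :=
    fun c s t hs hst a ha => (hs a ha).trans hst
  have hgK : ∀ p ∈ K, -halfSqNorm p.1 ≤ p.2 :=
    fun p hp => (neg_halfSqNorm_le_qP p.1).trans (hA.qP_le hp)
  obtain ⟨ℓ, β, hℓg, hℓK⟩ := exists_affine_between_of_concaveOn
    (convexOn_halfSqNorm (E := E)).neg (continuous_halfSqNorm (E := E)).neg hK ⟨_, hqK a₀ ha₀⟩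
    hKup hgK
  obtain ⟨b, hb⟩ := exists_pairP_eq hrefl ℓ
  have hβ : halfSqNorm b ≤ β := halfSqNorm_le_of_forall b fun c => hb c ▸ hℓg c
  have hbA : b ∈ A := hrel b fun a ha => by
    have := hℓK _ (hqK a ha)
    rw [hb] at this
    rw [sub_apply_sub_eq, pairP_comm]
    linarith [neg_halfSqNorm_le_qP b]
  refine ⟨b, hbA, ?_⟩
  have := hℓK _ (hqK b hbA)
  rw [hb, pairP_self] at this
  change halfSqNorm b = -qP b
  linarith [neg_halfSqNorm_le_qP b]

theorem MaxMono.sub_gnegJ_eq_univ (hrefl : ReflexiveSp E) {A : Set (E × StrongDual ℝ E)}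
    (hA : MaxMono A) : A - GnegJ E = Set.univ :=
  Set.eq_univ_of_forall fun w => by
    obtain ⟨b, hbA, hbG⟩ := (hA.preimage_add w).exists_mem_gnegJ hrefl
    exact ⟨b + w, hbA, b, hbG, add_sub_cancel_left b w⟩

theorem eq_zero_of_mem_gnegJ {b : E × StrongDual ℝ E} (hb : b ∈ GnegJ E) (h : 0 ≤ qP b) :
    b = 0 := by
  change 1 / 2 * ‖b.1‖ ^ 2 + 1 / 2 * ‖b.2‖ ^ 2 = -qP b at hb
  have h₁ : ‖b.1‖ = 0 := by nlinarith [norm_nonneg b.1, norm_nonneg b.2]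
  have h₂ : ‖b.2‖ = 0 := by nlinarith [norm_nonneg b.1, norm_nonneg b.2]
  exact Prod.ext (norm_eq_zero.1 h₁) (norm_eq_zero.1 h₂)

theorem maxMono_of_sub_gnegJ_eq_univ {A : Set (E × StrongDual ℝ E)} (hmono : MonoSet A)
    (h : A - GnegJ E = Set.univ) : MaxMono A := by
  have hsub : ∀ c, ∃ a ∈ A, ∃ b ∈ GnegJ E, a - b = c := fun c =>
    Set.mem_sub.1 (by rw [h]; trivial)
  refine maxMono_iff.2 ⟨?_, hmono, fun c hc => ?_⟩
  · obtain ⟨a, ha, -⟩ := hsub 0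
    exact ⟨a, ha⟩
  · obtain ⟨a, ha, b, hb, rfl⟩ := hsub c
    have hb0 := eq_zero_of_mem_gnegJ hb (by simpa [qP] using hc a ha)
    simpa [hb0] using ha

theorem stmt13_general (hrefl : ReflexiveSp E)
    (A : Set (E × StrongDual ℝ E)) (hmono : MonoSet A) :
    MaxMono A ↔ A - GnegJ E = (Set.univ : Set (E × StrongDual ℝ E)) :=
  ⟨MaxMono.sub_gnegJ_eq_univ hrefl, maxMono_of_sub_gnegJ_eq_univ hmono⟩

/-- if `E` is a nonzero reflexive Banach space and `A` is a monotone
subset of `E × E*`, then `A` is maximally monotone iff `A - G(-J) = E × E*`. -/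
theorem stmt13 [CompleteSpace E] [Nontrivial E] (hrefl : ReflexiveSp E)
    (A : Set (E × StrongDual ℝ E)) (hmono : MonoSet A) :
    MaxMono A ↔ A - GnegJ E = (Set.univ : Set (E × StrongDual ℝ E)) :=
  stmt13_general hrefl A hmono
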